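/- For every x ∈ S_{2n}, the intersection K ∩ HxH is non-empty, where H is the subgroup preserving each pair {2i-1,2i} and K is the subgroup preserving parity. -/

import Mathlib

/-- The equivalence `Fin n × Fin 2 ≃ Fin (2*n)`, `(a, b) ↦ 2a + b`. -/
def pairFinEquiv (n : ℕ) : Fin n × Fin 2 ≃ Fin (2 * n) where
  toFun p := ⟨2 * p.1.1 + p.2.1, by have h1 := p.1.2; have h2 := p.2.2; omega⟩
  invFun i := (⟨i.1 / 2, by have := i.2; omega⟩, ⟨i.1 % 2, by omega⟩)
  left_inv := by
    rintro ⟨⟨a, ha⟩, ⟨b, hb⟩⟩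
    simp only [Prod.mk.injEq]
    constructor <;> apply Fin.ext <;> simp <;> omega
  right_inv := by
    rintro ⟨i, hi⟩
    apply Fin.ext
    simp
    omega

/-- The doubling map `w ↦ w̃`, sending a permutation of `{0, …, n-1}` to the permutation of
`{0, …, 2n-1}` with `w̃(2i) = 2w(i)` and `w̃(2i+1) = 2w(i)+1` (the zero-based version of
`w̃(2i) = 2w(i)`, `w̃(2i-1) = 2w(i)-1`). -/
def double {n : ℕ} (w : Equiv.Perm (Fin n)) : Equiv.Perm (Fin (2 * n)) :=
  (pairFinEquiv n).permCongr (Equiv.prodCongr w (Equiv.refl (Fin 2)))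

/-- The number of inversions of a permutation, i.e. its Coxeter length. -/
noncomputable def invLength {n : ℕ} (u : Equiv.Perm (Fin n)) : ℕ :=
  Set.ncard { p : Fin n × Fin n | p.1 < p.2 ∧ u p.2 < u p.1 }

/-- Bruhat order on the symmetric group: the reflexive-transitive closure of the relation
`a → a * t` where `t` is a transposition and `ℓ(a * t) > ℓ(a)`. -/
def BruhatLE {n : ℕ} (x w : Equiv.Perm (Fin n)) : Prop :=
  Relation.ReflTransGen
    (fun a b => (∃ i j : Fin n, b = a * Equiv.swap i j) ∧ invLength a < invLength b) x w

/-- The subgroup `H` of `S_{2n}` of permutations preserving each pair `{2i, 2i+1}`. -/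
def pairSubgroup (n : ℕ) : Subgroup (Equiv.Perm (Fin (2 * n))) where
  carrier := { u | ∀ i, (u i).1 / 2 = i.1 / 2 }
  one_mem' := by intro i; rfl
  mul_mem' := by
    intro a b ha hb i
    rw [Equiv.Perm.mul_apply, ha, hb]
  inv_mem' := by
    intro a ha i
    have h := ha (a⁻¹ i)
    rw [show a (a⁻¹ i) = i from by simp] at h
    omega

/-- The subgroup `K` of `S_{2n}` of parity-preserving permutations. -/
def paritySubgroup (n : ℕ) : Subgroup (Equiv.Perm (Fin (2 * n))) where
  carrier := { u | ∀ i, (u i).1 % 2 = i.1 % 2 }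
  one_mem' := by intro i; rfl
  mul_mem' := by
    intro a b ha hb i
    rw [Equiv.Perm.mul_apply, ha, hb]
  inv_mem' := by
    intro a ha i
    have h := ha (a⁻¹ i)
    rw [show a (a⁻¹ i) = i from by simp] at h
    omega

/-- A permutation of `{0,…,2n-1}` is bi-`H`-reduced if it is increasing on each pair
`{2i, 2i+1}` and so is its inverse. -/
def BiReduced {n : ℕ} (v : Equiv.Perm (Fin (2 * n))) : Prop :=
  ∀ i : Fin n,
    v ⟨2 * i.1, by have := i.2; omega⟩ < v ⟨2 * i.1 + 1, by have := i.2; omega⟩ ∧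
    v⁻¹ ⟨2 * i.1, by have := i.2; omega⟩ < v⁻¹ ⟨2 * i.1 + 1, by have := i.2; omega⟩

/-- Membership of `v` in the double coset `H x H` of `H = pairSubgroup n`. -/
def InPairDoubleCoset {n : ℕ} (x v : Equiv.Perm (Fin (2 * n))) : Prop :=
  ∃ h₁ ∈ pairSubgroup n, ∃ h₂ ∈ pairSubgroup n, v = h₁ * x * h₂

/-- The matrix attached to a double coset `HuH`: the `(i,j)` entry is
`#({2i, 2i+1} ∩ u({2j, 2j+1}))`. -/
noncomputable def cosetMatrix {n : ℕ} (u : Equiv.Perm (Fin (2 * n))) :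
    Matrix (Fin n) (Fin n) ℕ :=
  fun i j => Set.ncard { k : Fin (2 * n) | k.1 / 2 = j.1 ∧ (u k).1 / 2 = i.1 }

/-- The simple reflection `s_j = (j, j+1)` of `S_n` (zero-based). -/
def sRefl {n : ℕ} (j : {j : ℕ // j + 1 < n}) : Equiv.Perm (Fin n) :=
  Equiv.swap ⟨j.1, Nat.lt_of_succ_lt j.2⟩ ⟨j.1 + 1, j.2⟩

/-- A Boolean permutation: a product of distinct simple reflections. -/
def BooleanPerm {n : ℕ} (w : Equiv.Perm (Fin n)) : Prop :=
  ∃ js : List {j : ℕ // j + 1 < n}, (js.map Subtype.val).Nodup ∧ w = (js.map sRefl).prod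

/-- `w` avoids the pattern `(321)`. -/
def Avoids321 {n : ℕ} (w : Equiv.Perm (Fin n)) : Prop :=
  ¬ ∃ i j k : Fin n, i < j ∧ j < k ∧ w k < w j ∧ w j < w i

/-- `w` avoids the pattern `(3412)`. -/
def Avoids3412 {n : ℕ} (w : Equiv.Perm (Fin n)) : Prop :=
  ¬ ∃ i j k l : Fin n, i < j ∧ j < k ∧ k < l ∧ w k < w l ∧ w l < w i ∧ w i < w j

/-- `w` avoids the pattern `(4231)`. -/
def Avoids4231 {n : ℕ} (w : Equiv.Perm (Fin n)) : Prop :=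
  ¬ ∃ i j k l : Fin n, i < j ∧ j < k ∧ k < l ∧ w l < w j ∧ w j < w k ∧ w k < w i

/-! Let `τ` exchange the two elements of every pair and let `ρ = x⁻¹ τ x`. Both are
fixed-point-free involutions, and since `τ` conjugates `ρ τ` to its inverse, `a` and `τ a` never
lie in the same cycle of `ρ τ`: the graph formed by the edges of `τ` and `ρ` has only even cycles.
Hence some 2-colouring `c` alternates along both `τ` and `ρ`. Exchanging within pairs, some
`h₂ ∈ H` transforms `c` into parity, and some `h₁ ∈ H` transforms parity into `c ∘ x⁻¹`
(which alternates along `τ`); then `h₁ x h₂` preserves parity. -/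

open Equiv Function

section Coloring

variable {α : Type*}

theorem exists_flip_of_involutive {f : α → α} (hf : Involutive f) (hfix : ∀ a, f a ≠ a) :
    ∃ c : α → Bool, ∀ a, c (f a) = !c a := by
  let : LinearOrder α := IsWellOrder.linearOrder WellOrderingRel
  refine ⟨fun a => decide (a < f a), fun a => ?_⟩
  change decide (f a < f (f a)) = !decide (a < f a)
  rw [hf a, ← decide_not, decide_eq_decide, not_lt, (hfix a).le_iff_lt]

namespace Equiv.Perm

variable {τ ρ : Perm α}

theorem apply_zpow_mul_of_involutive (hτ : Involutive τ) (hρ : Involutive ρ) (k : ℤ) (a : α) :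
    τ (((ρ * τ) ^ k) a) = ((ρ * τ) ^ (-k)) (τ a) := by
  have hτinv : τ⁻¹ = τ := inv_eq_of_mul_eq_one_right (Perm.ext hτ)
  have hρinv : ρ⁻¹ = ρ := inv_eq_of_mul_eq_one_right (Perm.ext hρ)
  have hconj : SemiconjBy τ (ρ * τ) (ρ * τ)⁻¹ := by
    rw [SemiconjBy, mul_inv_rev, hτinv, hρinv, mul_assoc]
  simpa only [Perm.mul_apply, inv_zpow'] using congrArg (· a) (hconj.zpow_right k).eq

theorem not_sameCycle_apply_of_involutive (hτ : Involutive τ) (hρ : Involutive ρ)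
    (hτfix : ∀ a, τ a ≠ a) (hρfix : ∀ a, ρ a ≠ a) (a : α) : ¬ (ρ * τ).SameCycle a (τ a) := by
  rintro ⟨k, hk⟩
  set b := ((ρ * τ) ^ (k / 2)) a
  have hτb : τ b = ((ρ * τ) ^ (k - k / 2)) a := by
    rw [apply_zpow_mul_of_involutive hτ hρ, ← hk, ← Perm.mul_apply, ← zpow_add]
    congr 2; ring
  rcases Int.emod_two_eq_zero_or_one k with h | h
  · apply hτfix b
    rw [hτb]; congr 2; omega
  · have hρτb : (ρ * τ) b = τ b := by
      rw [hτb, show k - k / 2 = 1 + k / 2 by omega, zpow_one_add]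
      rfl
    exact hρfix (τ b) hρτb

theorem exists_common_flip (hτ : Involutive τ) (hρ : Involutive ρ)
    (hτfix : ∀ a, τ a ≠ a) (hρfix : ∀ a, ρ a ≠ a) :
    ∃ c : α → Bool, (∀ a, c (τ a) = !c a) ∧ ∀ a, c (ρ a) = !c a := by
  let := SameCycle.setoid (ρ * τ)
  let τ' : Quotient (SameCycle.setoid (ρ * τ)) → Quotient (SameCycle.setoid (ρ * τ)) :=
    Quotient.map τ fun a b ⟨k, hk⟩ => ⟨-k, by rw [← apply_zpow_mul_of_involutive hτ hρ, hk]⟩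
  have hτ' : Involutive τ' := by
    rintro ⟨a⟩
    exact congrArg (Quotient.mk _) (hτ a)
  have hτ'fix : ∀ q, τ' q ≠ q := by
    rintro ⟨a⟩ h
    exact not_sameCycle_apply_of_involutive hτ hρ hτfix hρfix a (Quotient.exact h).symm
  obtain ⟨c, hc⟩ := exists_flip_of_involutive hτ' hτ'fix
  refine ⟨fun a => c ⟦a⟧, fun a => hc ⟦a⟧, fun a => ?_⟩
  have hρa : (⟦ρ a⟧ : Quotient (SameCycle.setoid (ρ * τ))) = τ' ⟦a⟧ :=
    Quotient.sound ⟨-1, by simp [symm_apply_eq, hτ a]⟩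
  exact (congrArg c hρa).trans (hc ⟦a⟧)

end Equiv.Perm

end Coloring

section Exchange

variable {α : Type*} {τ : Perm α}

theorem exists_perm_within_pairs_comp_eq (hτ : Involutive τ) {c p : α → Bool}
    (hc : ∀ a, c (τ a) = !c a) (hp : ∀ a, p (τ a) = !p a) :
    ∃ h : Perm α, (∀ a, h a = a ∨ h a = τ a) ∧ ∀ a, c (h a) = p a := by
  classical
  let f : α → α := fun a => if c a = p a then a else τ a
  have hf : Involutive f := by
    intro a
    by_cases ha : c a = p a
    · simp only [f, ha, if_true]
    · have hτa : ¬ c (τ a) = p (τ a) := by rwa [hc, hp, Bool.not_inj_iff]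
      simp only [f, ha, hτa, if_false, hτ a]
  refine ⟨hf.toPerm, fun a => ?_, fun a => ?_⟩ <;> by_cases ha : c a = p a
  · exact Or.inl (if_pos ha)
  · exact Or.inr (if_neg ha)
  · simp [f, ha]
  · simpa [f, ha, hc] using Bool.not_eq.mpr ha

theorem exists_mul_mul_comp_eq (hτ : Involutive τ) (hτfix : ∀ a, τ a ≠ a) {p : α → Bool}
    (hp : ∀ a, p (τ a) = !p a) (x : Perm α) :
    ∃ h₁ h₂ : Perm α, (∀ a, h₁ a = a ∨ h₁ a = τ a) ∧ (∀ a, h₂ a = a ∨ h₂ a = τ a) ∧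
      ∀ a, p ((h₁ * x * h₂) a) = p a := by
  have hρ : Involutive (x⁻¹ * τ * x) := fun a => by simp [hτ (x a)]
  have hρfix : ∀ a, (x⁻¹ * τ * x) a ≠ a := fun a h => hτfix (x a) (Perm.inv_eq_iff_eq.mp h)
  obtain ⟨c, hcτ, hcρ⟩ := Perm.exists_common_flip hτ hρ hτfix hρfix
  have hcx : ∀ y, c (x⁻¹ (τ y)) = !c (x⁻¹ y) := fun y => by simpa using hcρ (x⁻¹ y)
  obtain ⟨h₂, hh₂, hc₂⟩ := exists_perm_within_pairs_comp_eq hτ hcτ hp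
  obtain ⟨h₁, hh₁, hp₁⟩ := exists_perm_within_pairs_comp_eq
    (c := p) (p := fun y => c (x⁻¹ y)) hτ hp hcx
  exact ⟨h₁, h₂, hh₁, hh₂, fun a => by simp [hp₁, hc₂]⟩

end Exchange

section PairPartner

def pairPartner (n : ℕ) : Perm (Fin (2 * n)) :=
  Involutive.toPerm (fun k => ⟨if k.1 % 2 = 0 then k.1 + 1 else k.1 - 1, by split <;> omega⟩)
    fun k => Fin.ext (by dsimp only; split_ifs <;> omega)

variable (n : ℕ) (k : Fin (2 * n))

theorem pairPartner_val :
    (pairPartner n k).1 = if k.1 % 2 = 0 then k.1 + 1 else k.1 - 1 := rfl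

theorem pairPartner_involutive : Involutive (pairPartner n) := fun k =>
  Fin.ext (by simp only [pairPartner_val]; split_ifs <;> omega)

theorem pairPartner_ne : pairPartner n k ≠ k := fun h => by
  have := congrArg Fin.val h
  rw [pairPartner_val] at this
  split_ifs at this <;> omega

theorem pairPartner_div_two : (pairPartner n k).1 / 2 = k.1 / 2 := by
  rw [pairPartner_val]; split_ifs <;> omega

theorem pairPartner_mod_two :
    decide ((pairPartner n k).1 % 2 = 1) = !decide (k.1 % 2 = 1) := by
  rw [pairPartner_val, ← decide_not, decide_eq_decide]; split_ifs <;> omega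

end PairPartner

theorem mem_pairSubgroup_of_forall {n : ℕ} {h : Perm (Fin (2 * n))}
    (hh : ∀ k, h k = k ∨ h k = pairPartner n k) : h ∈ pairSubgroup n := fun k => by
  rcases hh k with hk | hk <;> rw [hk]
  exact pairPartner_div_two n k

/-- For every `x ∈ S_{2n}`, the intersection `K ∩ HxH` is non-empty. -/
theorem stmt11 (n : ℕ) (x : Equiv.Perm (Fin (2 * n))) :
    ∃ u ∈ paritySubgroup n, InPairDoubleCoset x u := by
  obtain ⟨h₁, h₂, hh₁, hh₂, hpar⟩ :=
    exists_mul_mul_comp_eq (pairPartner_involutive n) (pairPartner_ne n)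
      (p := fun k => decide (k.1 % 2 = 1)) (pairPartner_mod_two n) x
  refine ⟨h₁ * x * h₂, fun k => ?_, h₁, mem_pairSubgroup_of_forall hh₁, h₂,
    mem_pairSubgroup_of_forall hh₂, rfl⟩
  have := hpar k
  simp only [decide_eq_decide] at this
  omega
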